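/- Let (F', d'_Q, ω') be a degree-(k+1) Poincaré complex, and let (F, d_Q, ω, π) and (F̃, d̃_Q, ω̃, π̃) be degree-k Poincaré complexes relative to (F', d'_Q, ω'). Suppose f : F → F̃ and g : F̃ → F are chain maps satisfying π̃∘f = π and π∘g = π̃, and H : F^• → F^{•−1}, H̃ : F̃^• → F̃^{•−1} are linear maps satisfying d_Q H + H d_Q = id_F − g∘f, d̃_Q H̃ + H̃ d̃_Q = id_{F̃} − f∘g, π∘H = 0, and π̃∘H̃ = 0. Assume moreover ω̃(f(x), f(y)) = ω(x, y) for all x, y ∈ F. Define β̃ on homogeneous x̃, ỹ ∈ F̃ by β̃(x̃, ỹ) = (−1)^{k+1} [ ( ω̃(H̃ x̃, ỹ) + (−1)^{|x̃|+1} ω̃(x̃, H̃ ỹ) ) + (1/2)( −ω̃(H̃ x̃, H̃ d̃_Q ỹ) + (−1)^{|x̃|} ω̃(H̃ d̃_Q x̃, H̃ ỹ) ) − ω̃(H̃ x̃, d̃_Q H̃ ỹ) ]. Then for all homogeneous x̃, ỹ ∈ F̃ one has ω(g(x̃), g(ỹ)) = ω̃(x̃, ỹ) + (−1)^{k} ( β̃(d̃_Q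 x̃, ỹ) + (−1)^{|x̃|+1} β̃(x̃, d̃_Q ỹ) ). -/

import Mathlib

/-!
Since `f` preserves the pairings, `ω (g x) (g y) = ωt (f g x) (f g y)`, and
`f g = 1 - (dt Ht + Ht dt)`. Because `πt` kills the image of `Ht`, the relative compatibility
relation says that `dt` is graded-adjoint for `ωt` as soon as one argument lies in that image.
Expanding `ωt (f g x) (f g y)` bilinearly and moving `dt` across `ωt` in this way, and expanding
`βt (dt x) y ± βt x (dt y)` with `dt² = 0`, both sides reduce to the same seven terms.
-/

theorem neg_one_zpow_add_one {R : Type*} [DivisionRing R] (n : ℤ) :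
    (-1 : R) ^ (n + 1) = -(-1) ^ n := by
  simp [zpow_add_one₀]

theorem neg_one_zpow_sub_one {R : Type*} [DivisionRing R] (n : ℤ) :
    (-1 : R) ^ (n - 1) = -(-1) ^ n := by
  simp [zpow_sub_one₀]

theorem neg_one_zpow_mul_self {R : Type*} [DivisionRing R] (n : ℤ) :
    (-1 : R) ^ n * (-1) ^ n = 1 := by
  rw [← zpow_add₀ (neg_ne_zero.mpr one_ne_zero)]
  exact Even.neg_one_zpow ⟨n, rfl⟩

section RelativePairing

variable {k : ℤ} {V B : ℤ → Type*} [∀ i, AddCommGroup (V i)] [∀ i, Module ℝ (V i)]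
  [∀ i, AddCommGroup (B i)] [∀ i, Module ℝ (B i)]
  {d : ∀ i j : ℤ, j = i + 1 → (V i →ₗ[ℝ] V j)}
  {ω : ∀ i j : ℤ, i + j = -k → (V i →ₗ[ℝ] V j →ₗ[ℝ] ℝ)}
  {ωB : ∀ i j : ℤ, i + j = -(k + 1) → (B i →ₗ[ℝ] B j →ₗ[ℝ] ℝ)}
  {π : ∀ i, V i →ₗ[ℝ] B i}

theorem d_comp_d_apply (hd : ∀ i (x : V i), d (i + 1) (i + 2) (by lia) (d i (i + 1) rfl x) = 0)
    {i j l : ℤ} (hj : j = i + 1) (hl : l = j + 1) (x : V i) : d j l hl (d i j hj x) = 0 := by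
  subst hj
  obtain rfl : l = i + 2 := by lia
  exact hd i x

theorem pairing_d_adjoint_of_proj_eq_zero
    (hrel : ∀ i j (h : i + j = -(k + 1)) (x : V i) (y : V j),
      ω (i + 1) j (by lia) (d i (i + 1) rfl x) y
        + (-1 : ℝ) ^ (i + 1) * ω i (j + 1) (by lia) x (d j (j + 1) rfl y)
        = (-1 : ℝ) ^ (k + 1) * ωB i j h (π i x) (π j y))
    {i i' j j' : ℤ} (hi : i' = i + 1) (hj : j' = j + 1) (h : i' + j = -k) (h' : i + j' = -k)
    (x : V i) (y : V j) (hxy : π i x = 0 ∨ π j y = 0) :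
    ω i' j h (d i i' hi x) y = (-1 : ℝ) ^ i * ω i j' h' x (d j j' hj y) := by
  subst hi hj
  have hB : ωB i j (by lia) (π i x) (π j y) = 0 := by
    rcases hxy with h0 | h0 <;> simp [h0]
  have := hrel i j (by lia) x y
  rw [hB, mul_zero, neg_one_zpow_add_one] at this
  linear_combination this

variable {H : ∀ i j : ℤ, j = i - 1 → (V i →ₗ[ℝ] V j)}

theorem pairing_sub_dH_sub_Hd
    (hd : ∀ i (x : V i), d (i + 1) (i + 2) (by lia) (d i (i + 1) rfl x) = 0)
    (hrel : ∀ i j (h : i + j = -(k + 1)) (x : V i) (y : V j),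
      ω (i + 1) j (by lia) (d i (i + 1) rfl x) y
        + (-1 : ℝ) ^ (i + 1) * ω i (j + 1) (by lia) x (d j (j + 1) rfl y)
        = (-1 : ℝ) ^ (k + 1) * ωB i j h (π i x) (π j y))
    (hπH : ∀ i (x : V i), π (i - 1) (H i (i - 1) rfl x) = 0)
    {a b : ℤ} (hab : a + b = -k) (x : V a) (y : V b) :
    ω a b hab (x - d (a - 1) a (by lia) (H a (a - 1) rfl x)
        - H (a + 1) a (by lia) (d a (a + 1) rfl x))
      (y - d (b - 1) b (by lia) (H b (b - 1) rfl y)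
        - H (b + 1) b (by lia) (d b (b + 1) rfl y))
    = ω a b hab x y
      - (-1 : ℝ) ^ a * ω (a + 1) (b - 1) (by lia) (d a (a + 1) rfl x) (H b (b - 1) rfl y)
      - ω a b hab x (H (b + 1) b (by lia) (d b (b + 1) rfl y))
      + (-1 : ℝ) ^ a * ω (a - 1) (b + 1) (by lia) (H a (a - 1) rfl x) (d b (b + 1) rfl y)
      - (-1 : ℝ) ^ a * ω (a - 1) (b + 1) (by lia) (H a (a - 1) rfl x)
          (d b (b + 1) rfl (H (b + 1) b (by lia) (d b (b + 1) rfl y)))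
      - ω a b hab (H (a + 1) a (by lia) (d a (a + 1) rfl x)) y
      + ω a b hab (H (a + 1) a (by lia) (d a (a + 1) rfl x))
          (d (b - 1) b (by lia) (H b (b - 1) rfl y))
      + ω a b hab (H (a + 1) a (by lia) (d a (a + 1) rfl x))
          (H (b + 1) b (by lia) (d b (b + 1) rfl y)) := by
  have hdx_Hy := pairing_d_adjoint_of_proj_eq_zero hrel (i' := a + 1) (j' := b) rfl (by lia)
    (by lia) hab x (H b (b - 1) rfl y) (.inr (hπH b y))
  have hdHx_y := pairing_d_adjoint_of_proj_eq_zero hrel (i' := a) (j' := b + 1) (by lia) rfl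
    hab (by lia) (H a (a - 1) rfl x) y (.inl (hπH a x))
  have hdHx_dHy := pairing_d_adjoint_of_proj_eq_zero hrel (i' := a) (j' := b + 1) (by lia) rfl
    hab (by lia) (H a (a - 1) rfl x) (d (b - 1) b (by lia) (H b (b - 1) rfl y))
    (.inl (hπH a x))
  have hdHx_Hdy := pairing_d_adjoint_of_proj_eq_zero hrel (i' := a) (j' := b + 1) (by lia) rfl
    hab (by lia) (H a (a - 1) rfl x) (H (b + 1) b (by lia) (d b (b + 1) rfl y))
    (.inl (hπH a x))
  rw [d_comp_d_apply hd, map_zero, mul_zero] at hdHx_dHy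
  simp only [map_sub, LinearMap.sub_apply]
  rw [hdx_Hy, hdHx_y, hdHx_dHy, hdHx_Hdy, neg_one_zpow_sub_one]
  linear_combination
    ω a b hab x (d (b - 1) b (by lia) (H b (b - 1) rfl y)) * neg_one_zpow_mul_self (R := ℝ) a

end RelativePairing

theorem fiber_product_weak_equivalence_symplectic_correction_relative
    (k : ℤ)
    (F : ℤ → Type*) [∀ i, AddCommGroup (F i)] [∀ i, Module ℝ (F i)]
    (Ft : ℤ → Type*) [∀ i, AddCommGroup (Ft i)] [∀ i, Module ℝ (Ft i)]
    (F' : ℤ → Type*) [∀ i, AddCommGroup (F' i)] [∀ i, Module ℝ (F' i)]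
    -- the differentials (degree +1, squaring to zero)
    (dt : ∀ i j : ℤ, j = i + 1 → (Ft i →ₗ[ℝ] Ft j))
    (hdt2 : ∀ i (x : Ft i), dt (i+1) (i+2) (by omega) (dt i (i+1) rfl x) = 0)
    -- the pairings: ω, ωt of degree k; ω' of degree k+1
    (ω : ∀ i j : ℤ, i + j = -k → (F i →ₗ[ℝ] F j →ₗ[ℝ] ℝ))
    (ωt : ∀ i j : ℤ, i + j = -k → (Ft i →ₗ[ℝ] Ft j →ₗ[ℝ] ℝ))
    (ω' : ∀ i j : ℤ, i + j = -(k+1) → (F' i →ₗ[ℝ] F' j →ₗ[ℝ] ℝ))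
    -- the chain maps π, πt to the boundary complex
    (πt : ∀ i, Ft i →ₗ[ℝ] F' i)
    -- relative compatibility:
    --   ω(d x, y) + (-1)^{|x|+1} ω(x, d y) = (-1)^{k+1} ω'(π x, π y)
    (hωt_rel : ∀ i j (h : i + j = -(k+1)) (x : Ft i) (y : Ft j),
        ωt (i+1) j (by omega) (dt i (i+1) rfl x) y
          + (-1 : ℝ) ^ (i+1) * ωt i (j+1) (by omega) x (dt j (j+1) rfl y)
          = (-1 : ℝ) ^ (k+1) * ω' i j h (πt i x) (πt j y))
    -- chain maps f, g
    (f : ∀ i, F i →ₗ[ℝ] Ft i) (g : ∀ i, Ft i →ₗ[ℝ] F i)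
    -- chain homotopies:  dH + Hd = id - g f  and  dt Ht + Ht dt = id - f g
    (Ht : ∀ i j : ℤ, j = i - 1 → (Ft i →ₗ[ℝ] Ft j))
    (hHt : ∀ i (x : Ft i),
        dt (i-1) i (by omega) (Ht i (i-1) rfl x) + Ht (i+1) i (by omega) (dt i (i+1) rfl x)
          = x - f i (g i x))
    -- π∘H = 0 and πt∘Ht = 0
    (hπtHt : ∀ i (x : Ft i), πt (i-1) (Ht i (i-1) rfl x) = 0)
    -- f preserves the pairings:  ωt(f x, f y) = ω(x, y)
    (hfω : ∀ i j (h : i + j = -k) (x : F i) (y : F j),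
        ωt i j h (f i x) (f j y) = ω i j h x y)
    -- the degree-(k-1) bilinear form βt defined by the explicit formula
    (βt : ∀ i j : ℤ, i + j = 1 - k → (Ft i →ₗ[ℝ] Ft j →ₗ[ℝ] ℝ))
    (hβ : ∀ i j (h : i + j = 1 - k) (x : Ft i) (y : Ft j),
        βt i j h x y = (-1 : ℝ) ^ (k+1) *
          ( ( ωt (i-1) j (by omega) (Ht i (i-1) rfl x) y
              + (-1 : ℝ) ^ (i+1) * ωt i (j-1) (by omega) x (Ht j (j-1) rfl y) )
            + (1/2) *
              ( - ωt (i-1) j (by omega) (Ht i (i-1) rfl x)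
                    (Ht (j+1) j (by omega) (dt j (j+1) rfl y))
                + (-1 : ℝ) ^ i * ωt i (j-1) (by omega)
                    (Ht (i+1) i (by omega) (dt i (i+1) rfl x)) (Ht j (j-1) rfl y) )
            - ωt (i-1) j (by omega) (Ht i (i-1) rfl x)
                (dt (j-1) j (by omega) (Ht j (j-1) rfl y)) )) :
    -- conclusion:  ω(g x, g y) = ωt(x, y) + (L_Q βt)(x, y)
    ∀ a b (h : a + b = -k) (x : Ft a) (y : Ft b),
      ω a b h (g a x) (g b y)
        = ωt a b h x y + (-1 : ℝ) ^ k *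
            ( βt (a+1) b (by omega) (dt a (a+1) rfl x) y
              + (-1 : ℝ) ^ (a+1) * βt a (b+1) (by omega) x (dt b (b+1) rfl y) ) := by
  intro a b hab x y
  -- `hβ` with the shifted indices freed, so that they can be matched up to `omega`
  have hβ_apply : ∀ i im ip j jm jp (him : im = i - 1) (hip : ip = i + 1) (hjm : jm = j - 1)
      (hjp : jp = j + 1) (hij : i + j = 1 - k) (h₁ : im + j = -k) (h₂ : i + jm = -k)
      (u : Ft i) (v : Ft j),
      βt i j hij u v = (-1 : ℝ) ^ (k + 1) *
        ((ωt im j h₁ (Ht i im him u) v + (-1 : ℝ) ^ (i + 1) * ωt i jm h₂ u (Ht j jm hjm v))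
          + (1 / 2) * (- ωt im j h₁ (Ht i im him u) (Ht jp j (by omega) (dt j jp hjp v))
            + (-1 : ℝ) ^ i * ωt i jm h₂ (Ht ip i (by omega) (dt i ip hip u)) (Ht j jm hjm v))
          - ωt im j h₁ (Ht i im him u) (dt jm j (by omega) (Ht j jm hjm v))) := by
    rintro i _ _ j _ _ rfl rfl rfl rfl hij - - u v
    exact hβ i j hij u v
  have hfg : ∀ i (z : Ft i), f i (g i z) = z - dt (i - 1) i (by omega) (Ht i (i - 1) rfl z)
      - Ht (i + 1) i (by omega) (dt i (i + 1) rfl z) :=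
    fun i z => by rw [sub_sub, hHt, sub_sub_cancel]
  rw [← hfω, hfg, hfg, pairing_sub_dH_sub_Hd hdt2 hωt_rel hπtHt hab,
    hβ_apply (a + 1) a (a + 2) b (b - 1) (b + 1) (by omega) (by omega) rfl rfl _ hab (by omega),
    hβ_apply a (a - 1) (a + 1) (b + 1) b (b + 2) rfl rfl (by omega) (by omega) _ (by omega) hab,
    d_comp_d_apply hdt2, d_comp_d_apply hdt2]
  simp only [map_zero, LinearMap.zero_apply, mul_zero, neg_one_zpow_add_one]
  rcases Int.even_or_odd k with hk | hk <;> rcases Int.even_or_odd a with ha | ha <;>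
    simp only [hk.neg_one_zpow, ha.neg_one_zpow] <;> ring
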